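/- The set of functions in L²(ball(0,1), ℂ) that are (a.e. equal to) holomorphic functions on the open unit ball in ℂ is a closed subspace of L²(ball(0,1), ℂ). -/

import Mathlib

/-!
Integrating the mean value property of a holomorphic `g` over the circles of radius `ρ < r`
in polar coordinates gives `vol (ball z r) * ‖g z‖ ≤ ∫_{ball z r} ‖g‖`, and Hölder's inequality
turns this into `vol (ball z r) ^ (1 / p) * ‖g z‖ ≤ ‖g‖_{Lᵖ(U)}` whenever `ball z r ⊆ U`.
So holomorphic representatives of an `Lᵖ(U)`-Cauchy sequence are uniformly Cauchy on every
`{z | ball z r ⊆ U}`; their pointwise limit is then a locally uniform limit, hence holomorphic,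
and it agrees a.e. with the `Lᵖ` limit along an a.e. convergent subsequence.
-/

open Metric MeasureTheory Set Real Filter Topology
open scoped ENNReal

theorem circleMap_eq_add_polarCoord_symm (c : ℂ) (r θ : ℝ) :
    circleMap c r θ = c + Complex.polarCoord.symm (r, θ) := by
  simp [circleMap, Complex.exp_mul_I]

theorem lintegral_eq_lintegral_circleMap {f : ℂ → ℝ≥0∞} (hf : Measurable f) (c : ℂ) :
    ∫⁻ z, f z = ∫⁻ r in Ioi 0, ENNReal.ofReal r * ∫⁻ θ in Ioo (-π) π, f (circleMap c r θ) := by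
  calc ∫⁻ z, f z = ∫⁻ z, f (c + z) := (lintegral_add_left_eq_self f c).symm
    _ = ∫⁻ p in Ioi 0 ×ˢ Ioo (-π) π, ENNReal.ofReal p.1 * f (circleMap c p.1 p.2) := by
      rw [← Complex.lintegral_comp_polarCoord_symm]
      simp only [smul_eq_mul, circleMap_eq_add_polarCoord_symm]
      rfl
    _ = _ := by
      rw [Measure.volume_eq_prod, setLIntegral_prod _ (by fun_prop)]
      exact lintegral_congr fun r ↦ lintegral_const_mul' _ _ ENNReal.ofReal_ne_top

theorem setLIntegral_ofReal_Ioo_zero {r : ℝ} (hr : 0 ≤ r) :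
    ∫⁻ ρ in Ioo 0 r, ENNReal.ofReal ρ = ENNReal.ofReal (r ^ 2 / 2) := by
  rw [← ofReal_integral_eq_lintegral_ofReal
      ((continuous_id'.integrableOn_Icc (a := 0) (b := r)).mono_set Ioo_subset_Icc_self)
      (ae_restrict_of_forall_mem measurableSet_Ioo fun ρ hρ ↦ hρ.1.le),
    ← integral_Ioc_eq_integral_Ioo, ← intervalIntegral.integral_of_le hr, integral_id]
  ring_nf

theorem MeasureTheory.Lp.ae_eq_of_tendsto_of_ae_tendsto {α E : Type*} [MeasurableSpace α]
    [NormedAddCommGroup E] {μ : Measure α} {p : ℝ≥0∞} [Fact (1 ≤ p)] {F : ℕ → Lp E p μ}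
    {f : Lp E p μ} (hF : Tendsto F atTop (𝓝 f)) {gs : ℕ → α → E} {g : α → E}
    (hFg : ∀ n, F n =ᵐ[μ] gs n) (hg : ∀ᵐ x ∂μ, Tendsto (gs · x) atTop (𝓝 (g x))) :
    f =ᵐ[μ] g := by
  obtain ⟨ns, hns, hae⟩ := (tendstoInMeasure_of_tendsto_Lp hF).exists_seq_tendsto_ae
  filter_upwards [hae, hg, ae_all_iff.2 hFg] with x hFx hgx hFgx
  refine tendsto_nhds_unique hFx ?_
  exact (hgx.comp hns.tendsto_atTop).congr fun i ↦ (hFgx (ns i)).symm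

theorem tendstoLocallyUniformlyOn_limUnder_of_uniformCauchySeqOn {α β : Type*}
    [PseudoMetricSpace α] [UniformSpace β] [CompleteSpace β] [Nonempty β] {s : Set α}
    {F : ℕ → α → β} (hs : IsOpen s) (hF : ∀ r > 0, UniformCauchySeqOn F atTop {x | ball x r ⊆ s}) :
    TendstoLocallyUniformlyOn F (fun x ↦ limUnder atTop (F · x)) atTop s := by
  refine tendstoLocallyUniformlyOn_of_forall_exists_nhds fun x hx ↦ ?_
  obtain ⟨r, hr, hxr⟩ := Metric.isOpen_iff.1 hs x hx
  have hinner : ball x (r / 2) ⊆ {y | ball y (r / 2) ⊆ s} := fun y hy ↦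
    (ball_subset_ball' (by rw [mem_ball] at hy; linarith)).trans hxr
  refine ⟨ball x (r / 2), mem_nhdsWithin_of_mem_nhds (ball_mem_nhds x (half_pos hr)), ?_⟩
  have hcauchy := hF (r / 2) (half_pos hr)
  exact (hcauchy.tendstoUniformlyOn_of_tendsto fun y hy ↦
    (hcauchy.cauchySeq hy).tendsto_limUnder).mono hinner

variable {E : Type*} [NormedAddCommGroup E] [NormedSpace ℂ E] [CompleteSpace E]

theorem DiffContOnCl.two_pi_smul_eq_integral_circleMap {g : ℂ → E} {c : ℂ} {r : ℝ}
    (hg : DiffContOnCl ℂ g (ball c |r|)) :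
    (2 * π) • g c = ∫ θ in -π..π, g (circleMap c r θ) := by
  have hperiodic : (fun θ ↦ g (circleMap c r θ)).Periodic (2 * π) :=
    (periodic_circleMap c r).comp g
  rw [← hg.circleAverage, circleAverage_def, smul_inv_smul₀ (by positivity),
    ← zero_add (2 * π), ← hperiodic.intervalIntegral_add_eq (-π) 0]
  ring_nf

theorem DiffContOnCl.ofReal_two_pi_mul_enorm_le_lintegral_circleMap {g : ℂ → E} {c : ℂ} {r : ℝ}
    (hg : DiffContOnCl ℂ g (ball c |r|)) :
    ENNReal.ofReal (2 * π) * ‖g c‖ₑ ≤ ∫⁻ θ in Ioo (-π) π, ‖g (circleMap c r θ)‖ₑ := by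
  calc ENNReal.ofReal (2 * π) * ‖g c‖ₑ = ‖(2 * π) • g c‖ₑ := by
        rw [enorm_smul, Real.enorm_eq_ofReal (by positivity)]
    _ = ‖∫ θ in Ioc (-π) π, g (circleMap c r θ)‖ₑ := by
        rw [hg.two_pi_smul_eq_integral_circleMap,
          intervalIntegral.integral_of_le (by linarith [pi_pos])]
    _ ≤ ∫⁻ θ in Ioc (-π) π, ‖g (circleMap c r θ)‖ₑ := enorm_integral_le_lintegral_enorm _
    _ = ∫⁻ θ in Ioo (-π) π, ‖g (circleMap c r θ)‖ₑ := by
        rw [Measure.restrict_congr_set Ioo_ae_eq_Ioc]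

theorem DifferentiableOn.volume_ball_mul_enorm_le_lintegral {g : ℂ → E} {c : ℂ} {r : ℝ}
    (hg : DifferentiableOn ℂ g (ball c r)) :
    volume (ball c r) * ‖g c‖ₑ ≤ ∫⁻ z in ball c r, ‖g z‖ₑ := by
  rcases le_or_gt r 0 with hr | hr
  · simp [ball_eq_empty.mpr hr]
  classical
  set G := (ball c r).indicator fun z ↦ ‖g z‖ₑ with hG_def
  have hG : Measurable G := by
    rw [hG_def, ← piecewise_eq_indicator]
    exact hg.continuousOn.enorm.measurable_piecewise continuousOn_const measurableSet_ball
  have hcircle (ρ) (hρ : ρ ∈ Ioo 0 r) :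
      ENNReal.ofReal (2 * π) * ‖g c‖ₑ ≤ ∫⁻ θ in Ioo (-π) π, G (circleMap c ρ θ) := by
    have hsub : closedBall c |ρ| ⊆ ball c r := by
      rw [abs_of_pos hρ.1]
      exact closedBall_subset_ball hρ.2
    refine (hg.diffContOnCl_ball hsub).ofReal_two_pi_mul_enorm_le_lintegral_circleMap.trans_eq ?_
    refine setLIntegral_congr_fun measurableSet_Ioo fun θ _ ↦ ?_
    rw [hG_def, indicator_of_mem (hsub (sphere_subset_closedBall (circleMap_mem_sphere' c ρ θ)))]
  calc volume (ball c r) * ‖g c‖ₑ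
      = ∫⁻ ρ in Ioo 0 r, ENNReal.ofReal ρ * (ENNReal.ofReal (2 * π) * ‖g c‖ₑ) := by
        rw [lintegral_mul_const' _ _ (by finiteness), setLIntegral_ofReal_Ioo_zero hr.le,
          Complex.volume_ball, ← mul_assoc, ← ENNReal.ofReal_mul (by positivity),
          ← ENNReal.ofReal_pow hr.le, ← ENNReal.ofReal_coe_nnreal, NNReal.coe_real_pi,
          ← ENNReal.ofReal_mul (by positivity)]
        ring_nf
    _ ≤ ∫⁻ ρ in Ioo 0 r, ENNReal.ofReal ρ * ∫⁻ θ in Ioo (-π) π, G (circleMap c ρ θ) :=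
        setLIntegral_mono' measurableSet_Ioo fun ρ hρ ↦ by gcongr; exact hcircle ρ hρ
    _ ≤ ∫⁻ ρ in Ioi 0, ENNReal.ofReal ρ * ∫⁻ θ in Ioo (-π) π, G (circleMap c ρ θ) :=
        lintegral_mono_set Ioo_subset_Ioi_self
    _ = ∫⁻ z in ball c r, ‖g z‖ₑ := by
        rw [← lintegral_eq_lintegral_circleMap hG, lintegral_indicator measurableSet_ball]

-- For `p = ∞` the exponent is the junk value `1 / 0 = 0`, which still gives the right bound.
theorem DifferentiableOn.volume_ball_rpow_mul_enorm_le_eLpNorm {g : ℂ → E} {U : Set ℂ} {z : ℂ}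
    {r : ℝ} {p : ℝ≥0∞} (hp : 1 ≤ p) (hr : 0 < r) (hg : DifferentiableOn ℂ g U)
    (hzU : ball z r ⊆ U) :
    volume (ball z r) ^ (1 / p.toReal) * ‖g z‖ₑ ≤ eLpNorm g p (volume.restrict U) := by
  set V := volume (ball z r)
  have hV₀ : V ≠ 0 := (measure_ball_pos volume z hr).ne'
  have hV : V ≠ ∞ := measure_ball_lt_top.ne
  rw [← ENNReal.mul_le_mul_iff_right (ENNReal.rpow_pos (pos_iff_ne_zero.2 hV₀) hV).ne'
    (ENNReal.rpow_ne_top_of_ne_zero hV₀ hV (y := 1 - 1 / p.toReal)), ← mul_assoc,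
    ← ENNReal.rpow_add _ _ hV₀ hV, sub_add_cancel, ENNReal.rpow_one, mul_comm _ (eLpNorm _ _ _)]
  calc V * ‖g z‖ₑ ≤ ∫⁻ w in ball z r, ‖g w‖ₑ := (hg.mono hzU).volume_ball_mul_enorm_le_lintegral
    _ = eLpNorm g 1 (volume.restrict (ball z r)) := eLpNorm_one_eq_lintegral_enorm.symm
    _ ≤ eLpNorm g p (volume.restrict (ball z r)) *
          volume.restrict (ball z r) univ ^ (1 / (1 : ℝ≥0∞).toReal - 1 / p.toReal) :=
      eLpNorm_le_eLpNorm_mul_rpow_measure_univ hp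
        ((hg.mono hzU).continuousOn.aestronglyMeasurable measurableSet_ball)
    _ ≤ eLpNorm g p (volume.restrict U) * V ^ (1 - 1 / p.toReal) := by
      rw [Measure.restrict_apply_univ, ENNReal.toReal_one, div_one]
      gcongr

variable {U : Set ℂ} {p : ℝ≥0∞} [Fact (1 ≤ p)]

theorem uniformCauchySeqOn_of_cauchySeq_Lp {F : ℕ → Lp E p (volume.restrict U)}
    (hF : CauchySeq F) {gs : ℕ → ℂ → E} (hgs : ∀ n, DifferentiableOn ℂ (gs n) U)
    (hFg : ∀ n, F n =ᵐ[volume.restrict U] gs n) {r : ℝ} (hr : 0 < r) :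
    UniformCauchySeqOn gs atTop {z | ball z r ⊆ U} := by
  set C := volume (ball (0 : ℂ) r) ^ (1 / p.toReal)
  have hC₀ : C ≠ 0 := (ENNReal.rpow_pos (measure_ball_pos volume 0 hr) measure_ball_lt_top.ne).ne'
  have hC : C ≠ ∞ :=
    ENNReal.rpow_ne_top_of_ne_zero (measure_ball_pos volume 0 hr).ne' measure_ball_lt_top.ne
  intro u hu
  obtain ⟨ε, hε, hεu⟩ := mem_uniformity_edist.1 hu
  have hFε := (cauchySeq_iff_tendsto.1 hF).eventually
    (edist_mem_uniformity (ENNReal.mul_pos hC₀ hε.ne'))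
  rw [← prod_atTop_atTop_eq] at hFε
  filter_upwards [hFε] with mn hmn z hz
  refine hεu ((ENNReal.mul_lt_mul_iff_right hC₀ hC).1 (lt_of_le_of_lt ?_ hmn))
  have hdiff := ((hgs mn.1).sub (hgs mn.2)).volume_ball_rpow_mul_enorm_le_eLpNorm
    (Fact.out : 1 ≤ p) hr hz
  rw [Measure.addHaar_ball_center] at hdiff
  rw [edist_eq_enorm_sub, Lp.edist_def]
  refine hdiff.trans_eq (eLpNorm_congr_ae ?_)
  filter_upwards [hFg mn.1, hFg mn.2] with w h₁ h₂
  simp [h₁, h₂]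

theorem isClosed_setOf_ae_eq_differentiableOn (hU : IsOpen U) :
    IsClosed {f : Lp E p (volume.restrict U) | ∃ g : ℂ → E, DifferentiableOn ℂ g U ∧
      ∀ᵐ z ∂(volume.restrict U), f z = g z} := by
  refine IsSeqClosed.isClosed fun F f hF hFf ↦ ?_
  choose gs hgs hFg using hF
  have hlim := tendstoLocallyUniformlyOn_limUnder_of_uniformCauchySeqOn hU
    fun r hr ↦ uniformCauchySeqOn_of_cauchySeq_Lp hFf.cauchySeq hgs hFg hr
  refine ⟨_, hlim.differentiableOn (.of_forall hgs) hU, ?_⟩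
  exact Lp.ae_eq_of_tendsto_of_ae_tendsto hFf hFg
    (ae_restrict_of_forall_mem hU.measurableSet fun z hz ↦ hlim.tendsto_at hz)

theorem bergman_space_closed :
    IsClosed {f : Lp ℂ 2 (volume.restrict (ball (0 : ℂ) 1)) |
      ∃ g : ℂ → ℂ, DifferentiableOn ℂ g (ball (0 : ℂ) 1) ∧
        ∀ᵐ z ∂(volume.restrict (ball (0 : ℂ) 1)), f z = g z} :=
  isClosed_setOf_ae_eq_differentiableOn isOpen_ball
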